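/- Let η : ℝ → ℂ^r be compactly supported, continuous, not identically zero, satisfying \widehat{η}(2ξ) = 2^τ \widehat{a}(ξ) \widehat{η}(ξ) for a matrix mask a ∈ (ℓ₀)^{r×r} and τ ∈ ℝ. Let j ∈ ℕ₀ be the smallest integer with \widehat{η}^{(j)}(0) ≠ 0. Then \widehat{a}(0) \widehat{η}^{(j)}(0) = 2^{j−τ} \widehat{η}^{(j)}(0); in particular, 2^{j−τ} is an eigenvalue of \widehat{a}(0). -/

import Mathlib

open MeasureTheory

/-- The Fourier series of a matrix-valued sequence. -/
noncomputable def fhat {p q : ℕ} (u : ℤ → Matrix (Fin p) (Fin q) ℂ) (ξ : ℝ) :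
    Matrix (Fin p) (Fin q) ℂ :=
  ∑ᶠ k : ℤ, Complex.exp (-(Complex.I * (k : ℂ) * (ξ : ℂ))) • u k

/-- The Fourier transform of a vector function. -/
noncomputable def ft {q : ℕ} (f : ℝ → Fin q → ℂ) (ξ : ℝ) : Fin q → ℂ :=
  ∫ x : ℝ, Complex.exp (-(Complex.I * (x : ℂ) * (ξ : ℂ))) • f x

/-!
Differentiate the refinement equation `ft η (2ξ) = 2^τ • fhat a ξ *ᵥ ft η ξ` `j` times at `0`.
The left side gives `2^j • D` with `D = (ft η)^{(j)}(0)`. On the right, by the Leibniz rule,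
every term in which `fhat a` is differentiated at least once carries a derivative of `ft η` of
order `< j` at `0`, which vanishes; so the right side is `2^τ • fhat a 0 *ᵥ D`. Smoothness is
automatic: `fhat a` is a trigonometric polynomial and `ft η` is the Fourier transform of a
compactly supported continuous function.
-/

open scoped FourierTransform Real Matrix ContDiff

section IteratedDeriv

variable {𝕜 F G : Type*} [NontriviallyNormedField 𝕜] [NormedAddCommGroup F] [NormedSpace 𝕜 F]
  [NormedAddCommGroup G] [NormedSpace 𝕜 G] {n : ℕ} {x : 𝕜}

theorem ContinuousLinearMap.iteratedDeriv_comp_left {f : 𝕜 → F} (g : F →L[𝕜] G)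
    (hf : ContDiffAt 𝕜 n f x) : iteratedDeriv n (g ∘ f) x = g (iteratedDeriv n f x) := by
  simp only [iteratedDeriv_eq_iteratedFDeriv, g.iteratedFDeriv_comp_left hf le_rfl]
  rfl

theorem iteratedDeriv_apply {ι : Type*} [Fintype ι] {f : 𝕜 → ι → F} (hf : ContDiffAt 𝕜 n f x)
    (i : ι) : iteratedDeriv n (fun y => f y i) x = iteratedDeriv n f x i :=
  (ContinuousLinearMap.proj (R := 𝕜) (φ := fun _ : ι => F) i).iteratedDeriv_comp_left hf

variable {𝔸 : Type*} [NormedRing 𝔸] [NormedAlgebra 𝕜 𝔸]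

theorem iteratedDeriv_fun_mul_of_forall_lt_eq_zero {f g : 𝕜 → 𝔸} (hf : ContDiffAt 𝕜 n f x)
    (hg : ContDiffAt 𝕜 n g x) (hg0 : ∀ l < n, iteratedDeriv l g x = 0) :
    iteratedDeriv n (fun y => f y * g y) x = f x * iteratedDeriv n g x := by
  rw [iteratedDeriv_fun_mul hf hg, Finset.sum_eq_single 0]
  · simp
  · intro l hl hl0
    rw [hg0 _ (by grind)]
    simp
  · simp

variable {ι κ : Type*} [Fintype ι] [Fintype κ]

theorem iteratedDeriv_mulVec_of_forall_lt_eq_zero {A : 𝕜 → Matrix ι κ 𝔸} {f : 𝕜 → κ → 𝔸}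
    (hA : ∀ i k, ContDiffAt 𝕜 n (fun y => A y i k) x) (hf : ContDiffAt 𝕜 n f x)
    (hf0 : ∀ l < n, iteratedDeriv l f x = 0) :
    iteratedDeriv n (fun y => A y *ᵥ f y) x = A x *ᵥ iteratedDeriv n f x := by
  have hfk (k : κ) : ContDiffAt 𝕜 n (fun y => f y k) x := contDiffAt_pi.1 hf k
  have hAf : ContDiffAt 𝕜 n (fun y => A y *ᵥ f y) x :=
    contDiffAt_pi.2 fun i => ContDiffAt.sum fun k _ => (hA i k).mul (hfk k)
  ext i
  rw [← iteratedDeriv_apply hAf]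
  simp only [Matrix.mulVec, dotProduct]
  rw [iteratedDeriv_fun_sum fun k _ => (hA i k).mul (hfk k)]
  refine Finset.sum_congr rfl fun k _ => ?_
  refine (iteratedDeriv_fun_mul_of_forall_lt_eq_zero (hA i k) (hfk k) fun l hl => ?_).trans ?_
  · rw [iteratedDeriv_apply (hf.of_le (by exact_mod_cast hl.le)), hf0 l hl, Pi.zero_apply]
  · rw [iteratedDeriv_apply hf]

theorem pow_smul_iteratedDeriv_eq_mulVec {A : 𝕜 → Matrix ι ι 𝔸} {f : 𝕜 → ι → 𝔸} (c : 𝕜)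
    (hA : ∀ i k, ContDiffAt 𝕜 n (fun y => A y i k) 0) (hf : ContDiff 𝕜 n f)
    (hf0 : ∀ l < n, iteratedDeriv l f 0 = 0) (hfA : ∀ y, f (c * y) = A y *ᵥ f y) :
    c ^ n • iteratedDeriv n f 0 = A 0 *ᵥ iteratedDeriv n f 0 := calc
  c ^ n • iteratedDeriv n f 0 = iteratedDeriv n (fun y => f (c * y)) 0 := by
    simp only [iteratedDeriv_comp_const_smul hf, mul_zero]
  _ = iteratedDeriv n (fun y => A y *ᵥ f y) 0 := by simp only [hfA]
  _ = A 0 *ᵥ iteratedDeriv n f 0 := iteratedDeriv_mulVec_of_forall_lt_eq_zero hA hf.contDiffAt hf0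

end IteratedDeriv

theorem Matrix.mem_spectrum_of_mulVec_eq_smul {n K : Type*} [Fintype n] [DecidableEq n] [Field K]
    {A : Matrix n n K} {v : n → K} {μ : K} (hv : v ≠ 0) (hAv : A *ᵥ v = μ • v) :
    μ ∈ spectrum K A := by
  rw [← Matrix.spectrum_toLin', ← Module.End.hasEigenvalue_iff_mem_spectrum]
  exact Module.End.hasEigenvalue_of_hasEigenvector
    ⟨Module.End.mem_eigenspace_iff.2 (by simpa using hAv), hv⟩

theorem ft_eq_fourier {q : ℕ} (f : ℝ → Fin q → ℂ) (ξ : ℝ) : ft f ξ = 𝓕 f (ξ / (2 * π)) := by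
  rw [Real.fourier_eq', ft]
  congr 1
  ext x i
  have harg : (-2 * π * (inner ℝ x (ξ / (2 * π)) : ℝ) : ℝ) = -(x * ξ) := by
    simp only [RCLike.inner_apply, conj_trivial]
    field_simp
  rw [harg]
  push_cast
  ring_nf

theorem contDiff_ft {q : ℕ} {f : ℝ → Fin q → ℂ} (hc : Continuous f) (hs : HasCompactSupport f) :
    ContDiff ℝ ∞ (ft f) := by
  have hF : ContDiff ℝ ∞ (𝓕 f) := Real.contDiff_fourier fun n _ =>
    ((continuous_norm.pow n).mul hc.norm).integrable_of_hasCompactSupport hs.norm.mul_left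
  rw [funext (ft_eq_fourier f)]
  exact hF.comp (contDiff_id.div_const _)

theorem fhat_eq_sum {p q : ℕ} {u : ℤ → Matrix (Fin p) (Fin q) ℂ} (hu : (Function.support u).Finite)
    (ξ : ℝ) : fhat u ξ = ∑ k ∈ hu.toFinset, Complex.exp (-(Complex.I * (k : ℂ) * (ξ : ℂ))) • u k :=
  finsum_eq_sum_of_support_subset _ <| by
    rw [hu.coe_toFinset]
    exact Function.support_smul_subset_right (fun k : ℤ => Complex.exp _) u

theorem contDiff_fhat_apply {p q : ℕ} {u : ℤ → Matrix (Fin p) (Fin q) ℂ}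
    (hu : (Function.support u).Finite) (i : Fin p) (k : Fin q) :
    ContDiff ℝ ∞ (fun ξ => fhat u ξ i k) := by
  have hofReal : ContDiff ℝ ∞ ((↑) : ℝ → ℂ) := Complex.ofRealCLM.contDiff
  simp only [fhat_eq_sum hu, Matrix.sum_apply, Matrix.smul_apply, smul_eq_mul]
  fun_prop

theorem eigenvalue_from_limit_general {r : ℕ} (a : ℤ → Matrix (Fin r) (Fin r) ℂ)
    (ha : (Function.support a).Finite)
    (η : ℝ → Fin r → ℂ) (hηc : Continuous η) (hηs : HasCompactSupport η)
    (τ : ℝ)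
    (href : ∀ ξ : ℝ, ft η (2 * ξ) = (((2 : ℝ) ^ τ : ℝ) : ℂ) • (fhat a ξ).mulVec (ft η ξ))
    (j : ℕ) (hj0 : iteratedDeriv j (ft η) 0 ≠ 0)
    (hjmin : ∀ l < j, iteratedDeriv l (ft η) 0 = 0) :
    (fhat a 0).mulVec (iteratedDeriv j (ft η) 0) =
      (((2 : ℝ) ^ ((j : ℝ) - τ) : ℝ) : ℂ) • iteratedDeriv j (ft η) 0 ∧
    ((((2 : ℝ) ^ ((j : ℝ) - τ) : ℝ) : ℂ)) ∈ spectrum ℂ (fhat a 0) := by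
  set D := iteratedDeriv j (ft η) 0
  set c : ℂ := (((2 : ℝ) ^ τ : ℝ) : ℂ)
  have hA (i k : Fin r) : ContDiffAt ℝ j (fun ξ => (c • fhat a ξ) i k) 0 :=
    (contDiff_infty.1 ((contDiff_fhat_apply ha i k).const_smul c) j).contDiffAt
  have hscale : (2 : ℝ) ^ j • D = c • fhat a 0 *ᵥ D := by
    rw [← Matrix.smul_mulVec]
    exact pow_smul_iteratedDeriv_eq_mulVec 2 hA (contDiff_infty.1 (contDiff_ft hηc hηs) j) hjmin
      fun ξ => by rw [href, Matrix.smul_mulVec]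
  have hc : c ≠ 0 := Complex.ofReal_ne_zero.2 (by positivity)
  have heig : fhat a 0 *ᵥ D = (((2 : ℝ) ^ ((j : ℝ) - τ) : ℝ) : ℂ) • D := calc
    fhat a 0 *ᵥ D = c⁻¹ • c • fhat a 0 *ᵥ D := (inv_smul_smul₀ hc _).symm
    _ = c⁻¹ • (2 : ℝ) ^ j • D := by rw [hscale]
    _ = (((2 : ℝ) ^ ((j : ℝ) - τ) : ℝ) : ℂ) • D := by
      ext i
      simp only [c, Real.rpow_sub two_pos, Real.rpow_natCast, Pi.smul_apply, smul_eq_mul,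
        Complex.real_smul]
      push_cast
      ring
  exact ⟨heig, Matrix.mem_spectrum_of_mulVec_eq_smul hj0 heig⟩

/-- If `η ≢ 0` is compactly supported, continuous, with
`\widehat{η}(2ξ) = 2^τ \widehat{a}(ξ)\widehat{η}(ξ)`, and `j` is the smallest integer with
`\widehat{η}^{(j)}(0) ≠ 0`, then `\widehat{a}(0)\widehat{η}^{(j)}(0) = 2^{j−τ}\widehat{η}^{(j)}(0)`;
in particular `2^{j−τ}` is an eigenvalue of `\widehat{a}(0)`. -/
theorem eigenvalue_from_limit {r : ℕ} (a : ℤ → Matrix (Fin r) (Fin r) ℂ)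
    (ha : (Function.support a).Finite)
    (η : ℝ → Fin r → ℂ) (hηc : Continuous η) (hηs : HasCompactSupport η)
    (hηne : ¬ ∀ x : ℝ, η x = 0) (τ : ℝ)
    (href : ∀ ξ : ℝ, ft η (2 * ξ) = (((2 : ℝ) ^ τ : ℝ) : ℂ) • (fhat a ξ).mulVec (ft η ξ))
    (j : ℕ) (hj0 : iteratedDeriv j (ft η) 0 ≠ 0)
    (hjmin : ∀ l < j, iteratedDeriv l (ft η) 0 = 0) :
    (fhat a 0).mulVec (iteratedDeriv j (ft η) 0) =
      (((2 : ℝ) ^ ((j : ℝ) - τ) : ℝ) : ℂ) • iteratedDeriv j (ft η) 0 ∧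
    ((((2 : ℝ) ^ ((j : ℝ) - τ) : ℝ) : ℂ)) ∈ spectrum ℂ (fhat a 0) :=
  eigenvalue_from_limit_general a ha η hηc hηs τ href j hj0 hjmin
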